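/- arXiv:2308.13130 — 4 statements merged into one kernel-verified Lean document; each statement's English description precedes it below -/
import Mathlib

section
/- Let H be a realization of a degree sequence π, let G₂ be a graph on the same vertex set, and suppose H + G₂ is a near-packing with respect to a vertex y (every common edge of H and G₂ is incident to y). If some vertex l with degree 0 in H is not adjacent in G₂ to any vertex of N_H(y), then swapping the neighborhoods of y and l in H (a vertex interchange) yields a realization of π that is edge-disjoint from G₂. -/
/-!
Interchanging `y` and `l` relabels `H` by the transposition `(y l)`, so the degree multiset is
unchanged. Since `l` is isolated in `H`, every edge of the new graph either avoids `y` and `l`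
(hence is an edge of `H` missing `y`, which the near-packing keeps out of `G₂`) or joins `l` to
some `u ∈ N_H(y)`, which `G₂` lacks by assumption.
-/

open SimpleGraph

attribute [local instance] Classical.propDecidable

namespace SimpleGraph

variable {V W : Type*}

theorem degree_map_equiv (G : SimpleGraph V) (e : V ≃ W) (w : W)
    [Fintype ((G.map e.toEmbedding).neighborSet w)] [Fintype (G.neighborSet (e.symm w))] :
    (G.map e.toEmbedding).degree w = G.degree (e.symm w) := by
  convert ((Iso.map e G).symm.degree_eq w).symm using 2 <;> first | rfl | assumption

theorem map_equiv_adj (G : SimpleGraph V) (e : V ≃ W) (a b : W) :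
    (G.map e.toEmbedding).Adj a b ↔ G.Adj (e.symm a) (e.symm b) := by
  rw [← e.symm_symm, map_symm, comap_adj]
  rfl

theorem adj_map_swap_of_isIsolated [DecidableEq V] {G : SimpleGraph V} {y l a b : V}
    (hl : G.IsIsolated l) (h : (G.map (Equiv.swap y l).toEmbedding).Adj a b) :
    (G.Adj a b ∧ a ≠ y ∧ b ≠ y) ∨ (a = l ∧ G.Adj y b) ∨ (b = l ∧ G.Adj a y) := by
  rw [map_equiv_adj, Equiv.symm_swap] at h
  by_cases hay : a = y
  · exact (hl _ (by simpa [hay] using h)).elim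
  by_cases hby : b = y
  · exact (hl _ (by simpa [hby] using h.symm)).elim
  by_cases hal : a = l <;> by_cases hbl : b = l
  · exact (h.ne (by rw [hal, hbl])).elim
  · rw [hal, Equiv.swap_apply_right, Equiv.swap_apply_of_ne_of_ne hby hbl] at h
    exact .inr (.inl ⟨hal, h⟩)
  · rw [hbl, Equiv.swap_apply_right, Equiv.swap_apply_of_ne_of_ne hay hal] at h
    exact .inr (.inr ⟨hbl, h⟩)
  · rw [Equiv.swap_apply_of_ne_of_ne hay hal, Equiv.swap_apply_of_ne_of_ne hby hbl] at h
    exact .inl ⟨h, hay, hby⟩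

end SimpleGraph

theorem statement_8 {V : Type} [Fintype V] [DecidableEq V]
    (H G₂ : SimpleGraph V) (y l : V)
    (hnear : ∀ u v, H.Adj u v → G₂.Adj u v → u = y ∨ v = y)
    (hl : H.degree l = 0)
    (hnadj : ∀ u, H.Adj y u → ¬ G₂.Adj l u) :
    (∃ e : V ≃ V,
      ∀ v, (H.map (Equiv.swap y l).toEmbedding).degree v = H.degree (e v)) ∧
    Disjoint (H.map (Equiv.swap y l).toEmbedding).edgeSet G₂.edgeSet := by
  refine ⟨⟨Equiv.swap y l, fun v => by rw [degree_map_equiv, Equiv.symm_swap]⟩, ?_⟩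
  rw [Set.disjoint_left]
  rintro e he he₂
  induction e using Sym2.ind with
  | _ a b =>
    rcases adj_map_swap_of_isIsolated ((H.degree_eq_zero l).mp hl) he with
      ⟨hab, hay, hby⟩ | ⟨rfl, hyb⟩ | ⟨rfl, hay⟩
    · exact (hnear a b hab he₂).elim hay hby
    · exact hnadj b hyb he₂
    · exact hnadj a hay.symm he₂.symm
end

section
/- For Δ₂ ≤ Δ₁, the graph G₁ = K^{Δ₁+1} ∪ I^{Δ₁Δ₂−1} (a clique plus Δ₁Δ₂−1 isolated vertices) does not pack with G₂ = Δ₁K^{Δ₂+1} (Δ₁ disjoint cliques of size Δ₂+1); equivalently, no realization of the degree sequence of G₁ is edge-disjoint from G₂. -/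
/-!
Every neighbour of a vertex has positive degree, so in a realization `H` the set `S` of the
`Δ₁ + 1` vertices of degree `Δ₁` contains all their neighbours; each of them, having degree
`|S| - 1`, is then adjacent to all of `S`, so `S` is a clique of `H`. Edge-disjointness from the
`Δ₁` cliques of `G₂` lets `S` meet each of them at most once, whence `|S| ≤ Δ₁`.
-/

open SimpleGraph

attribute [local instance] Classical.propDecidable

namespace SimpleGraph

variable {V : Type*} [Fintype V] {G : SimpleGraph V} [DecidableRel G.Adj]

theorem neighborFinset_subset_filter_degree_eq {d : ℕ} (hdeg : ∀ v, G.degree v = d ∨ G.degree v = 0)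
    (v : V) :
    G.neighborFinset v ⊆ Finset.univ.filter fun w => G.degree w = d := by
  intro w hw
  rw [mem_neighborFinset] at hw
  have hpos : 0 < G.degree w := (G.degree_pos_iff_exists_adj w).mpr ⟨v, hw.symm⟩
  simpa [hpos.ne'] using hdeg w

theorem isClique_of_neighborFinset_subset_of_degree_add_one {S : Finset V} [DecidableEq V]
    (hnbr : ∀ v ∈ S, G.neighborFinset v ⊆ S) (hdeg : ∀ v ∈ S, G.degree v + 1 = S.card) :
    G.IsClique (S : Set V) := by
  intro a ha b hb hab
  have heq : G.neighborFinset a = S.erase a := by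
    refine Finset.eq_of_subset_of_card_le (fun w hw => Finset.mem_erase.mpr ⟨?_, hnbr a ha hw⟩) ?_
    · exact ((G.mem_neighborFinset a w).mp hw).ne'
    · rw [Finset.card_erase_of_mem ha, card_neighborFinset_eq_degree, ← hdeg a ha]
      rfl
  have hb' : b ∈ G.neighborFinset a := by
    rw [heq]
    exact Finset.mem_erase.mpr ⟨hab.symm, hb⟩
  exact (G.mem_neighborFinset a b).mp hb'

end SimpleGraph

theorem SimpleGraph.IsClique.injOn_of_disjoint_fromRel {V α : Type*} {G : SimpleGraph V}
    {s : Set V} (hs : G.IsClique s) (f : V → α)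
    (hdisj : Disjoint G.edgeSet (fromRel fun a b => f a = f b).edgeSet) : Set.InjOn f s := by
  intro a ha b hb hab
  by_contra hne
  have hrel : (fromRel fun a b => f a = f b).Adj a b := (fromRel_adj _ a b).mpr ⟨hne, Or.inl hab⟩
  exact Set.disjoint_left.mp hdisj (show s(a, b) ∈ G.edgeSet from hs ha hb hne) hrel

theorem statement_15_general (Δ₁ Δ₂ : ℕ) :
    ¬ ∃ H : SimpleGraph (Fin Δ₁ × Fin (Δ₂ + 1)),
      (∀ v, H.degree v = Δ₁ ∨ H.degree v = 0) ∧
      (Finset.univ.filter fun v => H.degree v = Δ₁).card = Δ₁ + 1 ∧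
      Disjoint H.edgeSet
        (SimpleGraph.fromRel fun a b : Fin Δ₁ × Fin (Δ₂ + 1) =>
          a.1 = b.1).edgeSet := by
  rintro ⟨H, hdeg, hcard, hdisj⟩
  set S := Finset.univ.filter fun v => H.degree v = Δ₁
  have hclique : H.IsClique (S : Set _) :=
    isClique_of_neighborFinset_subset_of_degree_add_one
      (fun v _ => neighborFinset_subset_filter_degree_eq hdeg v)
      (fun v hv => by rw [(Finset.mem_filter.mp hv).2, hcard])
  have hle : S.card ≤ Δ₁ := by
    simpa using Finset.card_le_card_of_injOn Prod.fst (fun _ _ => Finset.mem_univ _)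
      (hclique.injOn_of_disjoint_fromRel Prod.fst hdisj)
  omega

theorem statement_15 (Δ₁ Δ₂ : ℕ) (h1 : 1 ≤ Δ₂) (h2 : Δ₂ ≤ Δ₁) :
    ¬ ∃ H : SimpleGraph (Fin Δ₁ × Fin (Δ₂ + 1)),
      (∀ v, H.degree v = Δ₁ ∨ H.degree v = 0) ∧
      (Finset.univ.filter fun v => H.degree v = Δ₁).card = Δ₁ + 1 ∧
      Disjoint H.edgeSet
        (SimpleGraph.fromRel fun a b : Fin Δ₁ × Fin (Δ₂ + 1) =>
          a.1 = b.1).edgeSet :=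
  statement_15_general Δ₁ Δ₂
end

section
/- Let G be a simple graph with no K^{Δ(G)+1} subgraph and, if Δ(G) = 2, no odd cycle. Then the independence number of G satisfies α(G) ≥ ⌈n/Δ(G)⌉, where n is the number of vertices and Δ(G) ≥ 1. -/
/-
For `Δ ≥ 3`, Brooks' theorem colours `G` properly with `Δ` colours; for `Δ = 2` a graph without odd
cycles is bipartite; for `Δ = 1` the graph has no edges. A largest colour class is then an
independent set of size at least `⌈n / Δ⌉`.

Brooks' theorem is proved along Lovász's argument, one connected piece `s` at a time. If some
vertex has fewer than `Δ` neighbours in `s`, colour greedily towards it. If `s` has a cut vertex,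
colour both sides this way and match the colours at the cut vertex. Otherwise find two
non-adjacent neighbours `x`, `y` of a vertex `v` such that `s - x - y` stays connected, give `x`
and `y` the same colour and colour greedily towards `v`. If `s` is not 3-connected, `x` and `y`
are neighbours of `v` on both sides of a separating pair `{v, w}` chosen with a smallest separated
component, which keeps `s - x - y` connected.
-/

open SimpleGraph

attribute [local instance] Classical.propDecidable

namespace SimpleGraph

open Finset

variable {V : Type*} (G : SimpleGraph V)

def ReachableIn (s : Finset V) (u v : V) : Prop :=
  ∃ p : G.Walk u v, ∀ x ∈ p.support, x ∈ s

def PreconnectedOn (s : Finset V) : Prop :=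
  ∀ u ∈ s, ∀ v ∈ s, G.ReachableIn s u v

noncomputable def componentIn (s : Finset V) (u : V) : Finset V :=
  {v ∈ s | G.ReachableIn s u v}

noncomputable def degreeIn (s : Finset V) (u : V) : ℕ :=
  #{v ∈ s | G.Adj u v}

noncomputable def neighborColors {α : Type*} [DecidableEq α] (s : Finset V) (c : V → α) (u : V) :
    Finset α :=
  image c {v ∈ s | G.Adj u v}

def IsProperOn {α : Type*} (s : Finset V) (c : V → α) : Prop :=
  ∀ u ∈ s, ∀ v ∈ s, G.Adj u v → c u ≠ c v

variable {G}

section Reachability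

variable {s t A : Finset V} {u v w : V}

lemma Adj.reachableIn (huv : G.Adj u v) (hu : u ∈ s) (hv : v ∈ s) : G.ReachableIn s u v :=
  ⟨huv.toWalk, by simp [hu, hv]⟩

namespace ReachableIn

lemma mem_left (h : G.ReachableIn s u v) : u ∈ s :=
  let ⟨p, hp⟩ := h; hp u p.start_mem_support

lemma mem_right (h : G.ReachableIn s u v) : v ∈ s :=
  let ⟨p, hp⟩ := h; hp v p.end_mem_support

lemma refl (hu : u ∈ s) : G.ReachableIn s u u :=
  ⟨.nil, by simpa⟩

lemma symm (h : G.ReachableIn s u v) : G.ReachableIn s v u :=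
  let ⟨p, hp⟩ := h; ⟨p.reverse, by simpa using hp⟩

lemma trans (h : G.ReachableIn s u v) (h' : G.ReachableIn s v w) : G.ReachableIn s u w := by
  obtain ⟨p, hp⟩ := h
  obtain ⟨q, hq⟩ := h'
  refine ⟨p.append q, fun x hx => ?_⟩
  rcases Walk.mem_support_append_iff p q |>.1 hx with hx | hx
  exacts [hp x hx, hq x hx]

lemma mono (h : G.ReachableIn s u v) (hst : s ⊆ t) : G.ReachableIn t u v :=
  let ⟨p, hp⟩ := h; ⟨p, fun x hx => hst (hp x hx)⟩

lemma reachableIn_or_exists_adj (h : G.ReachableIn s u v) (hu : u ∈ A) :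
    G.ReachableIn A u v ∨ ∃ p q, G.ReachableIn A u p ∧ G.Adj p q ∧ q ∈ s ∧ q ∉ A := by
  obtain ⟨w, hw⟩ := h
  induction w with
  | nil => exact .inl (.refl hu)
  | @cons a b c hab w ih =>
    by_cases hb : b ∈ A
    · have hab' := hab.reachableIn hu hb
      rcases ih hb fun x hx => hw x (by simp [hx]) with h | ⟨p, q, hbp, hpq, hq⟩
      · exact .inl (hab'.trans h)
      · exact .inr ⟨p, q, hab'.trans hbp, hpq, hq⟩
    · exact .inr ⟨a, b, .refl hu, hab, hw b (by simp), hb⟩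

lemma exists_adj_of_notMem (h : G.ReachableIn s u v) (hu : u ∈ A) (hv : v ∉ A) :
    ∃ p q, G.ReachableIn A u p ∧ G.Adj p q ∧ q ∈ s ∧ q ∉ A :=
  (h.reachableIn_or_exists_adj hu).resolve_left fun h => hv h.mem_right

lemma componentIn (h : G.ReachableIn s u v) : G.ReachableIn (G.componentIn s u) u v := by
  obtain ⟨p, hp⟩ := h
  refine ⟨p, fun x hx => mem_filter.2 ⟨hp x hx, p.takeUntil x hx, fun y hy => hp y ?_⟩⟩
  exact p.support_takeUntil_subset_support hx hy

end ReachableIn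

lemma mem_componentIn : v ∈ G.componentIn s u ↔ G.ReachableIn s u v := by
  simp only [componentIn, mem_filter, and_iff_right_iff_imp]
  exact fun h => h.mem_right

lemma componentIn_subset : G.componentIn s u ⊆ s :=
  filter_subset _ _

lemma ReachableIn.erase {o : V} (h : G.ReachableIn s u v) (ho : ¬ G.ReachableIn s u o) :
    G.ReachableIn (s.erase o) u v :=
  h.componentIn.mono fun _ hk => mem_erase.2
    ⟨fun hko => ho (hko ▸ mem_componentIn.1 hk), componentIn_subset hk⟩

lemma preconnectedOn_componentIn : G.PreconnectedOn (G.componentIn s u) := fun _ ha _ hb =>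
  ((mem_componentIn.1 ha).componentIn.symm).trans (mem_componentIn.1 hb).componentIn

lemma ReachableIn.exists_adj (h : G.ReachableIn s u v) (huv : u ≠ v) :
    ∃ p, G.ReachableIn (s.erase v) u p ∧ G.Adj p v := by
  obtain ⟨p, q, hp, hpq, hqs, hq⟩ :=
    h.exists_adj_of_notMem (mem_erase.2 ⟨huv, h.mem_left⟩) (by simp)
  obtain rfl : q = v := by simpa [hqs] using hq
  exact ⟨p, hp, hpq⟩

end Reachability

section Degree

variable {s t : Finset V} {u v : V}

lemma degreeIn_mono (hst : s ⊆ t) : G.degreeIn s u ≤ G.degreeIn t u :=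
  card_le_card (filter_subset_filter _ hst)

lemma degreeIn_lt_degreeIn (hst : s ⊆ t) (hv : v ∈ t) (hvs : v ∉ s) (huv : G.Adj u v) :
    G.degreeIn s u < G.degreeIn t u :=
  card_lt_card <| (ssubset_iff_of_subset (filter_subset_filter _ hst)).2
    ⟨v, mem_filter.2 ⟨hv, huv⟩, fun h => hvs (mem_filter.1 h).1⟩

lemma degreeIn_union (hst : Disjoint s t) :
    G.degreeIn (s ∪ t) u = G.degreeIn s u + G.degreeIn t u := by
  rw [degreeIn, filter_union, card_union_of_disjoint (disjoint_filter_filter hst)]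
  rfl

lemma card_neighborColors_le {α : Type*} [DecidableEq α] (c : V → α) :
    #(G.neighborColors s c u) ≤ G.degreeIn s u :=
  card_image_le

end Degree

section Coloring

variable {α : Type*} {s t : Finset V} {c d : V → α}

lemma IsProperOn.comp {β : Type*} (hc : G.IsProperOn s c) {f : α → β} (hf : f.Injective) :
    G.IsProperOn s (f ∘ c) :=
  fun u hu v hv huv h => hc u hu v hv huv (hf h)

lemma IsProperOn.insert_update [DecidableEq α] (hc : G.IsProperOn s c) {v : V} {k : α}
    (hk : k ∉ G.neighborColors s c v) : G.IsProperOn (insert v s) (Function.update c v k) := by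
  have hk' : ∀ u ∈ insert v s, G.Adj v u → k ≠ c u := fun u hu hvu hku =>
    hk (mem_image.2 ⟨u, mem_filter.2 ⟨(mem_insert.1 hu).resolve_left hvu.ne', hvu⟩, hku.symm⟩)
  intro a ha b hb hab
  by_cases hav : a = v <;> by_cases hbv : b = v
  · exact absurd (hav.trans hbv.symm) hab.ne
  · subst hav
    simpa [hbv] using hk' b hb hab
  · subst hbv
    simpa [hav] using (hk' a ha hab.symm).symm
  · simpa [hav, hbv] using
      hc a ((mem_insert.1 ha).resolve_left hav) b ((mem_insert.1 hb).resolve_left hbv) hab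

lemma IsProperOn.piecewise (hc : G.IsProperOn s c) (hd : G.IsProperOn t d)
    (hcd : ∀ v ∈ s ∩ t, c v = d v) (hst : ∀ u ∈ s, ∀ v ∈ t, G.Adj u v → u ∈ t ∨ v ∈ s) :
    G.IsProperOn (s ∪ t) (s.piecewise c d) := by
  have key : ∀ u ∈ s, ∀ v ∈ s ∪ t, v ∉ s → G.Adj u v → c u ≠ d v := fun u hu v hv hvs huv => by
    have hvt := (mem_union.1 hv).resolve_left hvs
    rw [hcd u (mem_inter.2 ⟨hu, (hst u hu v hvt huv).resolve_right hvs⟩)]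
    exact hd u ((hst u hu v hvt huv).resolve_right hvs) v hvt huv
  intro u hu v hv huv
  by_cases hus : u ∈ s <;> by_cases hvs : v ∈ s <;> simp only [piecewise_eq_of_mem,
    piecewise_eq_of_notMem, hus, hvs, not_false_eq_true]
  · exact hc u hus v hvs huv
  · exact key u hus v hv hvs huv
  · exact (key v hvs u hu hus huv.symm).symm
  · exact hd u ((mem_union.1 hu).resolve_left hus) v ((mem_union.1 hv).resolve_left hvs) huv

lemma exists_isProperOn_of_forall_componentIn [Nonempty α]
    (h : ∀ u ∈ s, ∃ c : V → α, G.IsProperOn (G.componentIn s u) c) :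
    ∃ c : V → α, G.IsProperOn s c := by
  refine ⟨fun v => Classical.epsilon (G.IsProperOn (G.componentIn s v)) v, ?_⟩
  intro u hu v hv huv
  have huv' : G.ReachableIn s u v := huv.reachableIn hu hv
  have hcomp : G.componentIn s v = G.componentIn s u := by
    ext w
    exact ⟨fun h => mem_componentIn.2 (huv'.trans (mem_componentIn.1 h)),
      fun h => mem_componentIn.2 (huv'.symm.trans (mem_componentIn.1 h))⟩
  simp only [hcomp]
  exact Classical.epsilon_spec (h u hu) u (mem_componentIn.2 (.refl hu)) v
    (mem_componentIn.2 huv') huv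

end Coloring

section Greedy

variable {D : ℕ}

/-- Greedy colouring on top of the precolouring of `P`, with a root `r` coloured last. In `s - r`,
the vertex just before `r` on a walk towards `r` becomes a new root, having lost its neighbour `r`.
-/
theorem IsProperOn.exists_extension {P s : Finset V} {c : V → Fin D} (hc : G.IsProperOn P c)
    (hPs : Disjoint P s) (hle : ∀ u ∈ s, G.degreeIn s u + #(G.neighborColors P c u) ≤ D)
    (hroot : ∀ u ∈ s, ∃ r, G.ReachableIn s u r ∧ G.degreeIn s r + #(G.neighborColors P c r) < D) :
    ∃ c' : V → Fin D, G.IsProperOn (P ∪ s) c' ∧ ∀ v ∈ P, c' v = c v := by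
  induction s using Finset.strongInduction with
  | H s ih =>
  rcases s.eq_empty_or_nonempty with rfl | ⟨u, hu⟩
  · exact ⟨c, by simpa using hc, fun _ _ => rfl⟩
  obtain ⟨r, hur, hr⟩ := hroot u hu
  have hrs := hur.mem_right
  have hsub : s.erase r ⊆ s := erase_subset r s
  obtain ⟨c₁, hc₁, hc₁P⟩ := ih (s.erase r) (erase_ssubset hrs) (disjoint_of_subset_right hsub hPs)
    (fun z hz => (Nat.add_le_add_right (degreeIn_mono hsub) _).trans (hle z (hsub hz))) <| by
    intro z hz
    obtain ⟨r', hzr', hr'⟩ := hroot z (hsub hz)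
    rcases hzr'.reachableIn_or_exists_adj hz with h | ⟨p, q, hzp, hpq, hqs, hq⟩
    · exact ⟨r', h, (Nat.add_le_add_right (degreeIn_mono hsub) _).trans_lt hr'⟩
    · obtain rfl : r = q := by simpa [hqs, eq_comm] using hq
      have := degreeIn_lt_degreeIn hsub hrs (notMem_erase r s) hpq
      have := hle p (hsub hzp.mem_right)
      exact ⟨p, hzp, by omega⟩
  have hcolors : #(G.neighborColors (P ∪ s.erase r) c₁ r) < #(univ : Finset (Fin D)) := by
    have hP : G.neighborColors P c₁ r = G.neighborColors P c r :=
      image_congr fun v hv => hc₁P v (mem_filter.1 hv).1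
    calc #(G.neighborColors (P ∪ s.erase r) c₁ r)
        ≤ #(G.neighborColors P c r) + #(G.neighborColors (s.erase r) c₁ r) := by
          rw [neighborColors, filter_union, image_union, ← neighborColors, hP]
          exact card_union_le _ _
      _ ≤ #(G.neighborColors P c r) + G.degreeIn s r :=
          Nat.add_le_add_left (card_neighborColors_le c₁ |>.trans (degreeIn_mono hsub)) _
      _ < #(univ : Finset (Fin D)) := by rw [card_univ, Fintype.card_fin]; omega
  obtain ⟨k, -, hk⟩ := exists_mem_notMem_of_card_lt_card hcolors
  refine ⟨Function.update c₁ r k, ?_, fun v hv => ?_⟩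
  · rw [show P ∪ s = insert r (P ∪ s.erase r) by rw [← union_insert, insert_erase hrs]]
    exact hc₁.insert_update hk
  · have hvr : v ≠ r := fun hvr => Finset.disjoint_left.1 hPs hv (hvr ▸ hrs)
    rw [Function.update_of_ne hvr, hc₁P v hv]

theorem exists_isProperOn_of_forall_reachableIn_degreeIn_lt (hD : 0 < D) {s : Finset V}
    (hdeg : ∀ u ∈ s, G.degreeIn s u ≤ D)
    (hroot : ∀ u ∈ s, ∃ r, G.ReachableIn s u r ∧ G.degreeIn s r < D) :
    ∃ c : V → Fin D, G.IsProperOn s c := by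
  have hc : G.IsProperOn ∅ (fun _ => (⟨0, hD⟩ : Fin D)) := by simp [IsProperOn]
  obtain ⟨c, hc, -⟩ := hc.exists_extension (disjoint_empty_left s) (by simpa [neighborColors])
    (by simpa [neighborColors])
  exact ⟨c, by simpa using hc⟩

end Greedy

section CutVertex

variable {D : ℕ} {s K : Finset V} {a : V}

lemma PreconnectedOn.exists_reachableIn_adj (hs : G.PreconnectedOn s) (ha : a ∈ s)
    (hK : K ⊆ s.erase a) (hclosed : ∀ p ∈ K, ∀ q ∈ s.erase a, G.Adj p q → q ∈ K) {z : V}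
    (hz : z ∈ K) : ∃ p, G.ReachableIn K z p ∧ G.Adj p a := by
  obtain ⟨p, q, hzp, hpq, hqs, hqK⟩ :=
    (hs z (mem_of_mem_erase (hK hz)) a ha).exists_adj_of_notMem hz fun haK => by simpa using hK haK
  obtain rfl : a = q := by_contra fun hqa =>
    hqK (hclosed p hzp.mem_right q (mem_erase.2 ⟨Ne.symm hqa, hqs⟩) hpq)
  exact ⟨p, hzp, hpq⟩

lemma PreconnectedOn.exists_isProperOn_insert (hs : G.PreconnectedOn s)
    (hdeg : ∀ u ∈ s, G.degreeIn s u ≤ D) (ha : a ∈ s) (hK : K ⊆ s.erase a)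
    (hclosed : ∀ p ∈ K, ∀ q ∈ s.erase a, G.Adj p q → q ∈ K) {b : V} (hb : b ∈ s)
    (hbK : b ∉ insert a K) (hab : G.Adj a b) : ∃ c : V → Fin D, G.IsProperOn (insert a K) c := by
  have hsub : insert a K ⊆ s := insert_subset ha (hK.trans (erase_subset a s))
  have hdef : G.degreeIn (insert a K) a < D :=
    (degreeIn_lt_degreeIn hsub hb hbK hab).trans_le (hdeg a ha)
  refine exists_isProperOn_of_forall_reachableIn_degreeIn_lt (by omega)
    (fun u hu => (degreeIn_mono hsub).trans (hdeg u (hsub hu))) fun z hz => ⟨a, ?_, hdef⟩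
  rcases mem_insert.1 hz with rfl | hz
  · exact .refl (mem_insert_self _ _)
  · obtain ⟨p, hzp, hpa⟩ := hs.exists_reachableIn_adj ha hK hclosed hz
    exact (hzp.mono (subset_insert a K)).trans
      (hpa.reachableIn (mem_insert_of_mem hzp.mem_right) (mem_insert_self a K))

/-- Colour the two sides of a cut vertex `a` separately and permute the colours of one side so
that they agree at `a`. -/
theorem PreconnectedOn.exists_isProperOn_of_not_preconnectedOn_erase (hs : G.PreconnectedOn s)
    (hdeg : ∀ u ∈ s, G.degreeIn s u ≤ D) (ha : a ∈ s) (hcut : ¬ G.PreconnectedOn (s.erase a)) :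
    ∃ c : V → Fin D, G.IsProperOn s c := by
  obtain ⟨u, hu, w, hw, huw⟩ :
      ∃ u ∈ s.erase a, ∃ w ∈ s.erase a, ¬ G.ReachableIn (s.erase a) u w := by
    simpa only [PreconnectedOn, not_forall, exists_prop] using hcut
  set K := G.componentIn (s.erase a) u
  set K' := s.erase a \ K
  have hK : K ⊆ s.erase a := componentIn_subset
  have hK' : K' ⊆ s.erase a := sdiff_subset
  have hclosed : ∀ p ∈ K, ∀ q ∈ s.erase a, G.Adj p q → q ∈ K := fun p hp q hq hpq =>
    mem_componentIn.2 ((mem_componentIn.1 hp).trans (hpq.reachableIn (hK hp) hq))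
  have hclosed' : ∀ p ∈ K', ∀ q ∈ s.erase a, G.Adj p q → q ∈ K' := fun p hp q hq hpq =>
    mem_sdiff.2 ⟨hq, fun hqK => (mem_sdiff.1 hp).2 (hclosed q hqK p (hK' hp) hpq.symm)⟩
  obtain ⟨x, hux, hxa⟩ :=
    hs.exists_reachableIn_adj ha hK hclosed (mem_componentIn.2 (.refl hu))
  obtain ⟨y, hwy, hya⟩ := hs.exists_reachableIn_adj ha hK' hclosed'
    (mem_sdiff.2 ⟨hw, fun h => huw (mem_componentIn.1 h)⟩)
  have hx := hK hux.mem_right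
  have hy := hK' hwy.mem_right
  obtain ⟨c, hc⟩ := hs.exists_isProperOn_insert hdeg ha hK hclosed (mem_of_mem_erase hy)
    (by simpa [(mem_erase.1 hy).1] using (mem_sdiff.1 hwy.mem_right).2) hya.symm
  obtain ⟨d, hd⟩ := hs.exists_isProperOn_insert hdeg ha hK' hclosed' (mem_of_mem_erase hx)
    (by simp [(mem_erase.1 hx).1, K', hux.mem_right]) hxa.symm
  have hunion : insert a K ∪ insert a K' = s := by
    rw [insert_union, union_insert, insert_idem, union_sdiff_of_subset hK, insert_erase ha]
  rw [← hunion]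
  refine ⟨_, hc.piecewise (hd.comp (Equiv.swap (d a) (c a)).injective) ?_ ?_⟩
  · intro v hv
    obtain rfl : v = a := by
      by_contra hva
      obtain ⟨hv₁, hv₂⟩ := mem_inter.1 hv
      exact (mem_sdiff.1 ((mem_insert.1 hv₂).resolve_left hva)).2
        ((mem_insert.1 hv₁).resolve_left hva)
    simp
  · intro p hp q hq hpq
    rcases mem_insert.1 hp with rfl | hp
    · exact .inl (mem_insert_self _ _)
    rcases mem_insert.1 hq with rfl | hq
    · exact .inr (mem_insert_self _ _)
    exact .inr (mem_insert_of_mem (hclosed p hp q (hK' hq) hpq))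

end CutVertex

variable (G) in
/-- Lovász: colouring `x` and `y` alike and `v` last, greedy colouring needs only `D` colours. -/
structure IsLovaszTriple (s : Finset V) (v x y : V) : Prop where
  mem : v ∈ s
  mem_left : x ∈ s
  mem_right : y ∈ s
  adj_left : G.Adj v x
  adj_right : G.Adj v y
  ne : x ≠ y
  not_adj : ¬ G.Adj x y
  preconnectedOn : G.PreconnectedOn ((s.erase x).erase y)

theorem IsLovaszTriple.exists_isProperOn {D : ℕ} {s : Finset V} {v x y : V}
    (h : G.IsLovaszTriple s v x y) (hdeg : ∀ u ∈ s, G.degreeIn s u ≤ D) :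
    ∃ c : V → Fin D, G.IsProperOn s c := by
  set P : Finset V := {x, y}
  set r := (s.erase x).erase y
  have hPr : Disjoint P r := by simp [P, r]
  have hs : P ∪ r = s := by
    ext z
    by_cases hzx : z = x <;> by_cases hzy : z = y <;> simp [P, r, hzx, hzy, h.mem_left, h.mem_right]
  have hdeg' : ∀ u ∈ r, G.degreeIn r u + G.degreeIn P u ≤ D := fun u hu => by
    have := hdeg u (hs ▸ mem_union_right P hu)
    rwa [← hs, degreeIn_union hPr, add_comm] at this
  have hvr : v ∈ r := mem_erase.2 ⟨h.adj_right.ne, mem_erase.2 ⟨h.adj_left.ne, h.mem⟩⟩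
  have hdegP : G.degreeIn P v = 2 := by
    simp [degreeIn, P, filter_insert, filter_singleton, h.adj_left, h.adj_right, h.ne]
  have hD : 0 < D := by have := hdeg' v hvr; omega
  set c₀ : V → Fin D := fun _ => ⟨0, hD⟩
  have hc₀ : G.IsProperOn P c₀ := by
    intro a ha b hb hab
    simp only [P, mem_insert, mem_singleton] at ha hb
    rcases ha with rfl | rfl <;> rcases hb with rfl | rfl
    exacts [absurd rfl hab.ne, absurd hab h.not_adj, absurd hab.symm h.not_adj, absurd rfl hab.ne]
  have hcolors : ∀ u, #(G.neighborColors P c₀ u) ≤ 1 := fun u =>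
    card_le_one.2 fun a ha b hb => by
      obtain ⟨_, -, rfl⟩ := mem_image.1 ha
      obtain ⟨_, -, rfl⟩ := mem_image.1 hb
      rfl
  obtain ⟨c, hc, -⟩ := hc₀.exists_extension hPr
    (fun u hu => (Nat.add_le_add_left (card_neighborColors_le c₀) _).trans (hdeg' u hu))
    fun u hu => ⟨v, h.preconnectedOn u hu v hvr, by have := hdeg' v hvr; have := hcolors v; omega⟩
  exact ⟨c, hs ▸ hc⟩

section Separation

variable {s : Finset V} {v w : V}

lemma PreconnectedOn.exists_reachableIn_erase_erase_adj {t : V} (hs : G.PreconnectedOn (s.erase w))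
    (hv : v ∈ s) (hvw : v ≠ w) (ht : t ∈ (s.erase v).erase w) :
    ∃ x, G.ReachableIn ((s.erase v).erase w) t x ∧ G.Adj x v := by
  rw [erase_right_comm] at ht ⊢
  exact (hs t (mem_of_mem_erase ht) v (mem_erase.2 ⟨hvw, hv⟩)).exists_adj (mem_erase.1 ht).1

/-- A walk from `t` to `v` avoiding `b` stays in the component of `t` in `(s - v) - w` until it
first hits `v` or `w`, so it also avoids `o`. -/
lemma PreconnectedOn.reachableIn_erase_erase_or {b o t : V} (hs : G.PreconnectedOn (s.erase b))
    (hv : v ∈ s) (hvb : v ≠ b) (ho : o ∈ (s.erase v).erase w) (ht : t ∈ (s.erase v).erase w)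
    (htb : t ≠ b) (hto : ¬ G.ReachableIn ((s.erase v).erase w) t o) :
    G.ReachableIn ((s.erase b).erase o) t v ∨ G.ReachableIn ((s.erase b).erase o) t w := by
  have ht' : t ∈ s := mem_of_mem_erase (mem_of_mem_erase ht)
  obtain ⟨p, q, htp, hpq, hqs, hqE⟩ := (hs t (mem_erase.2 ⟨htb, ht'⟩) v
    (mem_erase.2 ⟨hvb, hv⟩)).exists_adj_of_notMem (mem_erase.2 ⟨htb, ht⟩) (by simp)
  have htp' : G.ReachableIn ((s.erase b).erase o) t p :=
    (htp.erase fun h => hto (h.mono (erase_subset _ _))).mono fun k hk => by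
      simp only [mem_erase] at hk ⊢
      tauto
  have hq : q = v ∨ q = w := by
    simp only [mem_erase] at hqs hqE
    tauto
  have hqo : q ∈ (s.erase b).erase o := by
    simp only [mem_erase] at hqs ho ⊢
    rcases hq with rfl | rfl <;> tauto
  rcases hq with rfl | rfl
  exacts [.inl (htp'.trans (hpq.reachableIn htp'.mem_right hqo)),
    .inr (htp'.trans (hpq.reachableIn htp'.mem_right hqo))]

/-- If not, the component of `z` in `(s - v) - x` would be a separated component smaller than
that of `u` in `(s - v) - w`. -/
lemma reachableIn_erase_erase_of_minimal {u x y z : V} (hv : v ∈ s) (hw : w ∈ s) (hvw : v ≠ w)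
    (hmin : ∀ a ∈ s, ∀ b ∈ s, ∀ z ∈ (s.erase a).erase b, ∀ o ∈ (s.erase a).erase b,
      ¬ G.ReachableIn ((s.erase a).erase b) z o →
      #(G.componentIn ((s.erase v).erase w) u) ≤ #(G.componentIn ((s.erase a).erase b) z))
    (hux : G.ReachableIn ((s.erase v).erase w) u x) (hy : y ∈ (s.erase v).erase w)
    (huy : ¬ G.ReachableIn ((s.erase v).erase w) u y)
    (huz : G.ReachableIn ((s.erase v).erase w) u z) (hzx : z ≠ x) :
    G.ReachableIn ((s.erase x).erase y) z w := by
  set E := (s.erase v).erase w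
  set T := (s.erase v).erase x
  have hxE := hux.mem_right
  have hzE := huz.mem_right
  simp only [E, mem_erase] at hxE hzE hy
  have hzT : z ∈ T := by simp [T, *]
  have hwT : w ∈ T := by simp [T, hw, hvw.symm, Ne.symm hxE.1]
  have hTE : T.erase w ⊆ E := fun k hk => by
    simp only [T, E, mem_erase] at hk ⊢
    tauto
  by_cases hzw : G.ReachableIn T z w
  · obtain ⟨p, q, hzp, hpq, hqT, hqw⟩ :=
      hzw.exists_adj_of_notMem (mem_erase.2 ⟨hzE.1, hzT⟩) (notMem_erase w T)
    obtain rfl : w = q := by simpa [hqT, eq_comm] using hqw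
    have hzp' : G.ReachableIn ((s.erase x).erase y) z p :=
      (hzp.erase fun h => huy (huz.trans (h.mono hTE))).mono fun k hk => by
        simp only [T, mem_erase] at hk ⊢
        tauto
    exact hzp'.trans (hpq.reachableIn hzp'.mem_right (by simp [hw, Ne.symm hy.1, Ne.symm hxE.1]))
  · have hsub : G.componentIn T z ⊆ (G.componentIn E u).erase x := fun k hk => by
      have hzk := mem_componentIn.1 hk
      refine mem_erase.2 ⟨?_, mem_componentIn.2 (huz.trans ((hzk.erase hzw).mono hTE))⟩
      rintro rfl
      simpa [T] using hzk.mem_right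
    have : #(G.componentIn E u) ≤ #(G.componentIn T z) := hmin v hv x hxE.2.2 z hzT w hwT hzw
    have := (card_le_card hsub).trans_lt (card_erase_lt_of_mem (mem_componentIn.2 hux))
    omega

/-- Every vertex of `(s - x) - y` reaches `v` or `w` there, depending on the side of `x` and `y`
it lies on. -/
lemma preconnectedOn_erase_erase {u x y : V} (hcut : ∀ a ∈ s, G.PreconnectedOn (s.erase a))
    (hv : v ∈ s) (hux : G.ReachableIn ((s.erase v).erase w) u x) (hy : y ∈ (s.erase v).erase w)
    (huy : ¬ G.ReachableIn ((s.erase v).erase w) u y) (hxv : G.Adj x v) (hyv : G.Adj y v)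
    (hwv : G.ReachableIn ((s.erase x).erase y) w v) : G.PreconnectedOn ((s.erase x).erase y) := by
  have hx := hux.mem_right
  have hreach : ∀ t ∈ (s.erase x).erase y, G.ReachableIn ((s.erase x).erase y) t v := by
    intro t ht
    by_cases htE : t ∈ (s.erase v).erase w
    · have htx : t ≠ x := (mem_erase.1 (mem_of_mem_erase ht)).1
      have hty : t ≠ y := (mem_erase.1 ht).1
      by_cases hut : G.ReachableIn ((s.erase v).erase w) u t
      · rcases (hcut x (mem_of_mem_erase (mem_of_mem_erase hx))).reachableIn_erase_erase_or hv
          hxv.ne' hy htE htx (fun h => huy (hut.trans h)) with h | h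
        exacts [h, h.trans hwv]
      · rw [erase_right_comm]
        rcases (hcut y (mem_of_mem_erase (mem_of_mem_erase hy))).reachableIn_erase_erase_or hv
          hyv.ne' hx htE hty (fun h => hut (hux.trans h.symm)) with h | h
        exacts [h, h.trans (erase_right_comm (s := s) ▸ hwv)]
    · have : t = v ∨ t = w := by
        simp only [mem_erase] at ht htE
        tauto
      rcases this with rfl | rfl
      exacts [.refl ht, hwv]
  exact fun a ha b hb => (hreach a ha).trans (hreach b hb).symm

/-- Take `x`, `y` adjacent to `v` in the component of `u` and in another component of
`(s - v) - w`; a neighbour `z ≠ x` of `x` in the former connects `v` and `w` avoiding `x`, `y`. -/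
theorem exists_isLovaszTriple_of_minimal {u o : V} (hcut : ∀ a ∈ s, G.PreconnectedOn (s.erase a))
    (hdeg : ∀ u ∈ s, 3 ≤ G.degreeIn s u) (hv : v ∈ s) (hw : w ∈ s)
    (hu : u ∈ (s.erase v).erase w) (ho : o ∈ (s.erase v).erase w)
    (huo : ¬ G.ReachableIn ((s.erase v).erase w) u o)
    (hmin : ∀ a ∈ s, ∀ b ∈ s, ∀ z ∈ (s.erase a).erase b, ∀ o ∈ (s.erase a).erase b,
      ¬ G.ReachableIn ((s.erase a).erase b) z o →
      #(G.componentIn ((s.erase v).erase w) u) ≤ #(G.componentIn ((s.erase a).erase b) z)) :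
    ∃ x y, G.IsLovaszTriple s v x y := by
  have hvw : v ≠ w := by
    rintro rfl
    simp only [erase_idem] at hu ho huo
    exact huo (hcut v hv u hu o ho)
  obtain ⟨x, hux, hxv⟩ := (hcut w hw).exists_reachableIn_erase_erase_adj hv hvw hu
  obtain ⟨y, hoy, hyv⟩ := (hcut w hw).exists_reachableIn_erase_erase_adj hv hvw ho
  have huy : ¬ G.ReachableIn ((s.erase v).erase w) u y := fun h => huo (h.trans hoy.symm)
  have hxE := hux.mem_right
  have hyE := hoy.mem_right
  have hx : x ∈ s := mem_of_mem_erase (mem_of_mem_erase hxE)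
  obtain ⟨z, hz, hzvw⟩ : ∃ z ∈ {z ∈ s | G.Adj x z}, z ∉ ({v, w} : Finset V) :=
    exists_mem_notMem_of_card_lt_card ((card_le_two).trans_lt (hdeg x hx))
  simp only [mem_filter, mem_insert, mem_singleton, not_or] at hz hzvw
  have huz := hux.trans (hz.2.reachableIn hxE (by simp [hz.1, hzvw.1, hzvw.2]))
  have hwv : G.ReachableIn ((s.erase x).erase y) w v := by
    have hzw := reachableIn_erase_erase_of_minimal hv hw hvw hmin hux hyE huy huz hz.2.ne'
    rw [erase_right_comm] at hmin hux hyE huy huz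
    exact hzw.symm.trans
      (reachableIn_erase_erase_of_minimal hw hv hvw.symm hmin hux hyE huy huz hz.2.ne')
  exact ⟨x, y, hv, hx, mem_of_mem_erase (mem_of_mem_erase hyE), hxv.symm, hyv.symm,
    fun h => huy (h ▸ hux), fun h => huy (hux.trans (h.reachableIn hxE hyE)),
    preconnectedOn_erase_erase hcut hv hux hyE huy hxv hyv hwv⟩

theorem exists_isLovaszTriple {x y : V} (hcut : ∀ a ∈ s, G.PreconnectedOn (s.erase a))
    (hdeg : ∀ u ∈ s, 3 ≤ G.degreeIn s u) (hv : v ∈ s) (hx : x ∈ s) (hy : y ∈ s)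
    (hvx : G.Adj v x) (hvy : G.Adj v y) (hxy : x ≠ y) (hnxy : ¬ G.Adj x y) :
    ∃ v x y, G.IsLovaszTriple s v x y := by
  by_cases h3 : ∀ a ∈ s, ∀ b ∈ s, G.PreconnectedOn ((s.erase a).erase b)
  · exact ⟨v, x, y, hv, hx, hy, hvx, hvy, hxy, hnxy, h3 x hx y hy⟩
  have hsep : ∃ n, ∃ a ∈ s, ∃ b ∈ s, ∃ u ∈ (s.erase a).erase b, ∃ o ∈ (s.erase a).erase b,
      ¬ G.ReachableIn ((s.erase a).erase b) u o ∧ #(G.componentIn ((s.erase a).erase b) u) = n := by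
    simp only [PreconnectedOn, not_forall, exists_prop] at h3
    obtain ⟨a, ha, b, hb, u, hu, o, ho, huo⟩ := h3
    exact ⟨_, a, ha, b, hb, u, hu, o, ho, huo, rfl⟩
  -- a separating pair `{a, b}` whose separated component is as small as possible
  obtain ⟨a, ha, b, hb, u, hu, o, ho, huo, hn⟩ := Nat.find_spec hsep
  exact ⟨a, exists_isLovaszTriple_of_minimal hcut hdeg ha hb hu ho huo
    fun a' ha' b' hb' z hz o' ho' hzo =>
      hn ▸ Nat.find_min' hsep ⟨a', ha', b', hb', z, hz, o', ho', hzo, rfl⟩⟩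

end Separation

section Brooks

variable {D : ℕ} {s : Finset V} {u : V}

lemma CliqueFree.exists_not_adj_of_degreeIn_eq (hclique : G.CliqueFree (D + 1))
    (hdeg : G.degreeIn s u = D) :
    ∃ x ∈ s, ∃ y ∈ s, G.Adj u x ∧ G.Adj u y ∧ x ≠ y ∧ ¬ G.Adj x y := by
  set N : Finset V := {v ∈ s | G.Adj u v}
  have hN : ¬ G.IsClique (N : Set V) := fun hN =>
    hclique (insert u N) <| (isNClique_iff _).2
      ⟨by rw [coe_insert, isClique_insert]; exact ⟨hN, fun b hb _ => (mem_filter.1 hb).2⟩,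
       by rw [card_insert_of_notMem (by simp [N]), ← hdeg]; rfl⟩
  simp only [IsClique, Set.Pairwise, N, coe_filter, Set.mem_ofPred_eq, not_forall,
    exists_prop] at hN
  obtain ⟨x, ⟨hx, hux⟩, y, ⟨hy, huy⟩, hxy, hnxy⟩ := hN
  exact ⟨x, hx, y, hy, hux, huy, hxy, hnxy⟩

theorem PreconnectedOn.exists_isProperOn (hD : 3 ≤ D) (hs : G.PreconnectedOn s)
    (hdeg : ∀ u ∈ s, G.degreeIn s u ≤ D) (hclique : G.CliqueFree (D + 1)) :
    ∃ c : V → Fin D, G.IsProperOn s c := by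
  by_cases hdef : ∃ r ∈ s, G.degreeIn s r < D
  · obtain ⟨r, hr, hrD⟩ := hdef
    exact exists_isProperOn_of_forall_reachableIn_degreeIn_lt (by omega) hdeg
      fun u hu => ⟨r, hs u hu r hr, hrD⟩
  push Not at hdef
  have hreg : ∀ u ∈ s, G.degreeIn s u = D := fun u hu => (hdeg u hu).antisymm (hdef u hu)
  by_cases hcut : ∃ a ∈ s, ¬ G.PreconnectedOn (s.erase a)
  · obtain ⟨a, ha, hcut⟩ := hcut
    exact hs.exists_isProperOn_of_not_preconnectedOn_erase hdeg ha hcut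
  push Not at hcut
  rcases s.eq_empty_or_nonempty with rfl | ⟨u, hu⟩
  · exact ⟨fun _ => ⟨0, by omega⟩, by simp [IsProperOn]⟩
  obtain ⟨x, hx, y, hy, hux, huy, hxy, hnxy⟩ := hclique.exists_not_adj_of_degreeIn_eq (hreg u hu)
  obtain ⟨v, x, y, h⟩ := exists_isLovaszTriple hcut (fun u hu => (hreg u hu).symm ▸ hD) hu hx hy
    hux huy hxy hnxy
  exact h.exists_isProperOn hdeg

/-- **Brooks' theorem** for `D ≥ 3`. -/
theorem colorable_of_maxDegree_le_of_cliqueFree [Fintype V] (hD : 3 ≤ D) (hΔ : G.maxDegree ≤ D)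
    (hclique : G.CliqueFree (D + 1)) : G.Colorable D := by
  have : Nonempty (Fin D) := ⟨⟨0, by omega⟩⟩
  have hdeg (u z : V) : G.degreeIn (G.componentIn univ u) z ≤ D :=
    calc G.degreeIn (G.componentIn univ u) z ≤ G.degreeIn univ z := degreeIn_mono componentIn_subset
      _ = G.degree z := by rw [← card_neighborFinset_eq_degree, neighborFinset_eq_filter]; rfl
      _ ≤ D := (G.degree_le_maxDegree z).trans hΔ
  obtain ⟨c, hc⟩ := exists_isProperOn_of_forall_componentIn (s := univ) fun u _ =>
    preconnectedOn_componentIn.exists_isProperOn hD (fun z _ => hdeg u z) hclique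
  exact ⟨Coloring.mk c fun huv => hc _ (mem_univ _) _ (mem_univ _) huv⟩

end Brooks

theorem Walk.exists_odd_isCycle_of_odd_length {u : V} (w : G.Walk u u) (hw : Odd w.length) :
    ∃ (v : V) (c : G.Walk v v), c.IsCycle ∧ Odd c.length := by
  induction hn : w.length using Nat.strong_induction_on generalizing u with
  | _ n ih =>
  cases w with
  | nil => simp at hw
  | cons h p =>
    by_cases hp : p.IsPath
    · refine ⟨u, .cons h p, Walk.isCycle_iff_isPath_tail_and_le_length.2 ⟨by simpa using hp, ?_⟩,
        hw⟩
      have : p.length ≠ 0 := fun h0 => h.ne (Walk.eq_of_length_eq_zero h0).symm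
      rw [Nat.odd_iff] at hw
      simp only [Walk.length_cons] at hw ⊢
      omega
    · -- cutting a closed subwalk `c` out of `p` leaves two shorter closed walks, one of them odd
      obtain ⟨x, c, ⟨ru, rv, rfl⟩, hc⟩ : ∃ x, ∃ c : G.Walk x x, c.IsSubwalk p ∧ ¬ c.Nil := by
        simpa [Walk.isPath_iff_isSubwalk_imp_nil] using hp
      have hc : 0 < c.length := Walk.not_nil_iff_lt_length.1 hc
      simp only [Walk.length_cons, Walk.length_append] at hn hw
      rcases Nat.even_or_odd c.length with he | ho
      · refine ih _ (by simp only [Walk.length_cons, Walk.length_append]; omega)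
          (.cons h (ru.append rv)) ?_ rfl
        simp only [Walk.length_cons, Walk.length_append]
        rw [Nat.odd_iff] at hw ⊢
        rw [Nat.even_iff] at he
        omega
      · exact ih _ (by omega) c ho rfl

theorem Colorable.exists_isIndepSet_div_le_card [Fintype V] {D : ℕ} (h : G.Colorable D) :
    ∃ s : Finset V, G.IsIndepSet (s : Set V) ∧ (Fintype.card V + D - 1) / D ≤ #s := by
  obtain ⟨c⟩ := h
  set n := (Fintype.card V + D - 1) / D
  rcases Nat.eq_zero_or_pos n with h0 | hpos
  · exact ⟨∅, by simp, by omega⟩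
  have hD : 0 < D := Nat.pos_of_ne_zero fun h => by simp [n, h] at hpos
  have hle : n * D ≤ Fintype.card V + D - 1 := Nat.div_mul_le_self _ _
  obtain ⟨i, hi⟩ := Fintype.exists_lt_card_fiber_of_mul_lt_card c (n := n - 1) <| by
    rw [Fintype.card_fin, Nat.mul_sub_one, mul_comm]
    have : D ≤ n * D := Nat.le_mul_of_pos_left D hpos
    omega
  refine ⟨({v | c v = i} : Finset V), fun a ha b hb _ hab => c.valid hab ?_, by omega⟩
  simp only [coe_filter, mem_univ, true_and, Set.mem_ofPred_eq] at ha hb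
  rw [ha, hb]

end SimpleGraph

theorem statement_17_general {V : Type} [Fintype V] (G : SimpleGraph V)
    (hclique : ¬ ∃ s : Finset V, s.card = G.maxDegree + 1 ∧ G.IsClique ↑s)
    (hodd : G.maxDegree = 2 →
      ¬ ∃ (v : V) (c : G.Walk v v), c.IsCycle ∧ Odd c.length) :
    ∃ s : Finset V, (∀ a ∈ s, ∀ b ∈ s, ¬ G.Adj a b) ∧
      (Fintype.card V + G.maxDegree - 1) / G.maxDegree ≤ s.card := by
  set Δ := G.maxDegree
  have hfree : G.CliqueFree (Δ + 1) := fun t ht => hclique ⟨t, ht.card_eq, ht.isClique⟩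
  obtain hΔ | hcol : Δ = 0 ∨ G.Colorable Δ := by
    obtain h | h | h | h : Δ = 0 ∨ Δ = 1 ∨ Δ = 2 ∨ 3 ≤ Δ := by omega
    · exact .inl h
    · rw [h] at hfree ⊢
      exact .inr ⟨Coloring.mk (fun _ => 0) fun huv => by simp [cliqueFree_two.1 hfree] at huv⟩
    · refine .inr (h ▸ two_colorable_iff_forall_loop_even.2 fun u w => ?_)
      exact Nat.not_odd_iff_even.1 fun hw => hodd h (w.exists_odd_isCycle_of_odd_length hw)
    · exact .inr (colorable_of_maxDegree_le_of_cliqueFree h le_rfl hfree)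
  · -- the bound is `(n - 1) / 0 = 0`
    exact ⟨∅, by simp, by simp [hΔ]⟩
  · obtain ⟨s, hs, hcard⟩ := hcol.exists_isIndepSet_div_le_card
    exact ⟨s, fun a ha b hb hab => hs ha hb hab.ne hab, hcard⟩

theorem statement_17 {V : Type} [Fintype V] (G : SimpleGraph V)
    (hΔ : 1 ≤ G.maxDegree)
    (hclique : ¬ ∃ s : Finset V, s.card = G.maxDegree + 1 ∧ G.IsClique ↑s)
    (hodd : G.maxDegree = 2 →
      ¬ ∃ (v : V) (c : G.Walk v v), c.IsCycle ∧ Odd c.length) :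
    ∃ s : Finset V, (∀ a ∈ s, ∀ b ∈ s, ¬ G.Adj a b) ∧
      (Fintype.card V + G.maxDegree - 1) / G.maxDegree ≤ s.card :=
  statement_17_general G hclique hodd
end

section
/- Let H and G₂ be graphs on a common vertex set with H + G₂ a near-packing with respect to a vertex y of minimum positive degree δ₊ in H, chosen among all such near-packings to minimize the number of bad pairs. Let x form a bad pair with y, set G = H + G₂, I = V − (N_G[x] ∪ N_G[y]), and W = N_G[x] ∩ N_G[y] − {x,y}. Then for every vertex u ∈ I, N_H(u) ⊆ W. -/
/-!
A 2-switch replacing the edges `xy`, `cd` of `H` by `xc`, `yd` preserves every degree, and when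
neither `xc` nor `yd` is an edge of `G₂` it destroys the bad pair `xy` without creating a new one.
Minimality therefore forces `x ~ c` or `y ~ d` in `H ⊔ G₂` for every edge `cd` of `H` with
`c ≠ x`, `d ≠ y`. For `u ∈ I` and an `H`-edge `uw`, the orientation `(c, d) = (w, u)` gives
`x ~ w` and `(c, d) = (u, w)` gives `y ~ w`.
-/

open SimpleGraph Finset

attribute [local instance] Classical.propDecidable

namespace SimpleGraph

variable {V : Type*}

def twoSwitch (H : SimpleGraph V) (a b c d : V) : SimpleGraph V :=
  H.deleteEdges {s(a, b), s(c, d)} ⊔ fromEdgeSet {s(a, c), s(b, d)}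

def IsNearPacking (H G : SimpleGraph V) (y : V) : Prop :=
  ∀ u v, H.Adj u v → G.Adj u v → u = y ∨ v = y

variable (H : SimpleGraph V) {a b c d : V}

lemma twoSwitch_adj {v w : V} : (H.twoSwitch a b c d).Adj v w ↔
    (H.Adj v w ∧ s(v, w) ≠ s(a, b) ∧ s(v, w) ≠ s(c, d)) ∨
      ((s(v, w) = s(a, c) ∨ s(v, w) = s(b, d)) ∧ v ≠ w) := by
  simp only [twoSwitch, sup_adj, deleteEdges_adj, fromEdgeSet_adj, Set.mem_insert_iff,
    Set.mem_singleton_iff, not_or]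

lemma twoSwitch_swap_pairs : H.twoSwitch c d a b = H.twoSwitch a b c d := by
  rw [twoSwitch, twoSwitch, Set.pair_comm s(c, d), Sym2.eq_swap (a := c) (b := a),
    Sym2.eq_swap (a := d) (b := b)]

lemma twoSwitch_swap_ends : H.twoSwitch b a d c = H.twoSwitch a b c d := by
  rw [twoSwitch, twoSwitch, Sym2.eq_swap (a := b) (b := a), Sym2.eq_swap (a := d) (b := c),
    Set.pair_comm s(b, d)]

lemma adj_of_twoSwitch_adj_of_adj {H : SimpleGraph V} (G : SimpleGraph V) (hac : ¬G.Adj a c)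
    (hbd : ¬G.Adj b d) {v w : V} (hH : (H.twoSwitch a b c d).Adj v w) (hG : G.Adj v w) :
    H.Adj v w ∧ s(v, w) ≠ s(a, b) := by
  rw [twoSwitch_adj] at hH
  rcases hH with ⟨hH, hab, -⟩ | ⟨hvw | hvw, -⟩
  · exact ⟨hH, hab⟩
  · rw [← G.mem_edgeSet, hvw, mem_edgeSet] at hG; exact absurd hG hac
  · rw [← G.mem_edgeSet, hvw, mem_edgeSet] at hG; exact absurd hG hbd

lemma IsNearPacking.twoSwitch {H G : SimpleGraph V} {y : V} (hH : H.IsNearPacking G y)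
    (hac : ¬G.Adj a c) (hbd : ¬G.Adj b d) : (H.twoSwitch a b c d).IsNearPacking G y :=
  fun _ _ hH' hG => hH _ _ (adj_of_twoSwitch_adj_of_adj G hac hbd hH' hG).1 hG

variable [Fintype V]

lemma neighborFinset_twoSwitch_left (hab : H.Adj a b) (hcd : H.Adj c d) (hac : ¬H.Adj a c)
    (hac' : a ≠ c) :
    (H.twoSwitch a b c d).neighborFinset a = insert c ((H.neighborFinset a).erase b) := by
  have had : a ≠ d := by rintro rfl; exact hac hcd.symm
  have hab' : a ≠ b := hab.ne
  ext z
  simp only [mem_neighborFinset, twoSwitch_adj, mem_insert, mem_erase, Sym2.eq_iff, ne_eq,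
    hab', hac', had, true_and, false_and, or_false, not_false_eq_true, and_true]
  constructor
  · rintro (⟨h, hz⟩ | ⟨hz, -⟩)
    · exact .inr ⟨hz, h⟩
    · exact .inl hz
  · rintro (rfl | ⟨hz, h⟩)
    · exact .inr ⟨rfl, hac'⟩
    · exact .inl ⟨h, hz⟩

lemma degree_twoSwitch_left (hab : H.Adj a b) (hcd : H.Adj c d) (hac : ¬H.Adj a c)
    (hac' : a ≠ c) : (H.twoSwitch a b c d).degree a = H.degree a := by
  rw [← card_neighborFinset_eq_degree, ← card_neighborFinset_eq_degree,
    neighborFinset_twoSwitch_left H hab hcd hac hac', card_insert_of_notMem, card_erase_add_one]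
  · simpa using hab
  · simp [hac]

lemma neighborFinset_twoSwitch_of_ne {v : V} (ha : v ≠ a) (hb : v ≠ b) (hc : v ≠ c)
    (hd : v ≠ d) : (H.twoSwitch a b c d).neighborFinset v = H.neighborFinset v := by
  ext z
  simp [twoSwitch_adj, ha, hb, hc, hd]

lemma degree_twoSwitch (hab : H.Adj a b) (hcd : H.Adj c d) (hac : ¬H.Adj a c)
    (hbd : ¬H.Adj b d) (hac' : a ≠ c) (hbd' : b ≠ d) (v : V) :
    (H.twoSwitch a b c d).degree v = H.degree v := by
  by_cases ha : v = a
  · subst ha; exact H.degree_twoSwitch_left hab hcd hac hac'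
  by_cases hb : v = b
  · subst hb
    rw [← twoSwitch_swap_ends]
    exact H.degree_twoSwitch_left hab.symm hcd.symm hbd hbd'
  by_cases hc : v = c
  · subst hc
    rw [← twoSwitch_swap_pairs]
    exact H.degree_twoSwitch_left hcd hab (fun h => hac h.symm) hac'.symm
  by_cases hd : v = d
  · subst hd
    rw [← twoSwitch_swap_pairs, ← twoSwitch_swap_ends]
    exact H.degree_twoSwitch_left hcd.symm hab.symm (fun h => hbd h.symm) hbd'.symm
  rw [← card_neighborFinset_eq_degree, ← card_neighborFinset_eq_degree,
    H.neighborFinset_twoSwitch_of_ne ha hb hc hd]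

lemma card_inter_edgeFinset_twoSwitch_lt {H : SimpleGraph V} (G : SimpleGraph V)
    (hab : H.Adj a b) (hab' : G.Adj a b) (hac : ¬G.Adj a c) (hbd : ¬G.Adj b d) :
    #((H.twoSwitch a b c d).edgeFinset ∩ G.edgeFinset) < #(H.edgeFinset ∩ G.edgeFinset) := by
  refine (card_le_card fun e he => ?_).trans_lt (card_erase_lt_of_mem (a := s(a, b)) ?_)
  · induction e with
    | h v w =>
      simp only [mem_inter, mem_edgeFinset, mem_edgeSet] at he
      obtain ⟨hH, hne⟩ := adj_of_twoSwitch_adj_of_adj G hac hbd he.1 he.2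
      simpa [hH, hne] using he.2
  · simpa using ⟨hab, hab'⟩

end SimpleGraph

lemma sup_adj_or_sup_adj_of_minimal {V : Type*} [Fintype V] {H G₂ : SimpleGraph V}
    {x y c d : V} (hnear : H.IsNearPacking G₂ y)
    (hmin : ∀ H' : SimpleGraph V, (∀ v, H'.degree v = H.degree v) → H'.IsNearPacking G₂ y →
      #(H.edgeFinset ∩ G₂.edgeFinset) ≤ #(H'.edgeFinset ∩ G₂.edgeFinset))
    (hxy : H.Adj x y) (hxy' : G₂.Adj x y) (hcd : H.Adj c d) (hxc : x ≠ c) (hyd : y ≠ d) :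
    (H ⊔ G₂).Adj x c ∨ (H ⊔ G₂).Adj y d := by
  by_contra! ⟨hxc', hyd'⟩
  simp only [sup_adj, not_or] at hxc' hyd'
  have hdeg := H.degree_twoSwitch hxy hcd hxc'.1 hyd'.1 hxc hyd
  exact (hmin _ hdeg (hnear.twoSwitch hxc'.2 hyd'.2)).not_gt
    (card_inter_edgeFinset_twoSwitch_lt G₂ hxy hxy' hxc'.2 hyd'.2)

theorem statement_18_general {V : Type} [Fintype V] (H G₂ : SimpleGraph V) (y x : V)
    (hnear : ∀ u v, H.Adj u v → G₂.Adj u v → u = y ∨ v = y)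
    (hmin : ∀ (H' : SimpleGraph V) (y' : V),
      (∃ e : V ≃ V, ∀ v, H'.degree v = H.degree (e v)) →
      H'.degree y' = H.degree y →
      (∀ u v, H'.Adj u v → G₂.Adj u v → u = y' ∨ v = y') →
      (H.edgeFinset ∩ G₂.edgeFinset).card ≤ (H'.edgeFinset ∩ G₂.edgeFinset).card)
    (hbad : H.Adj x y ∧ G₂.Adj x y) :
    ∀ u, u ≠ x → u ≠ y → ¬ (H ⊔ G₂).Adj x u → ¬ (H ⊔ G₂).Adj y u →
      ∀ w, H.Adj u w →
        (H ⊔ G₂).Adj x w ∧ (H ⊔ G₂).Adj y w ∧ w ≠ x ∧ w ≠ y := by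
  intro u hux huy hxu hyu w huw
  obtain ⟨hxy, hxy'⟩ := hbad
  have hwx : w ≠ x := by rintro rfl; exact hxu (Or.inl huw.symm)
  have hwy : w ≠ y := by rintro rfl; exact hyu (Or.inl huw.symm)
  have exchange {c d : V} := sup_adj_or_sup_adj_of_minimal (c := c) (d := d) hnear
    (fun H' hdeg => hmin H' y ⟨Equiv.refl V, hdeg⟩ (hdeg y)) hxy hxy'
  exact ⟨(exchange huw.symm hwx.symm huy.symm).resolve_right hyu,
    (exchange huw hux.symm hwy.symm).resolve_left hxu, hwx, hwy⟩

theorem statement_18 {V : Type} [Fintype V] (H G₂ : SimpleGraph V) (y x : V)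
    (hydeg : 0 < H.degree y)
    (hymin : ∀ v, 0 < H.degree v → H.degree y ≤ H.degree v)
    (hnear : ∀ u v, H.Adj u v → G₂.Adj u v → u = y ∨ v = y)
    (hmin : ∀ (H' : SimpleGraph V) (y' : V),
      (∃ e : V ≃ V, ∀ v, H'.degree v = H.degree (e v)) →
      H'.degree y' = H.degree y →
      (∀ u v, H'.Adj u v → G₂.Adj u v → u = y' ∨ v = y') →
      (H.edgeFinset ∩ G₂.edgeFinset).card ≤ (H'.edgeFinset ∩ G₂.edgeFinset).card)
    (hbad : H.Adj x y ∧ G₂.Adj x y) :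
    ∀ u, u ≠ x → u ≠ y → ¬ (H ⊔ G₂).Adj x u → ¬ (H ⊔ G₂).Adj y u →
      ∀ w, H.Adj u w →
        (H ⊔ G₂).Adj x w ∧ (H ⊔ G₂).Adj y w ∧ w ≠ x ∧ w ≠ y :=
  statement_18_general H G₂ y x hnear hmin hbad
end
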